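/- Let q be a prime power with characteristic p, and let α = Σ_{n≥1} α_n t^{-pn} ∈ F_q((t^{-1})). Then for every polynomial u = Σ_{m=0}^N c_m t^m ∈ F_q[t], the coefficient of t^{-1} in the Laurent series α·u^p is 0; equivalently, the fractional part of α·u^p never lies in the cylinder set C(1;1) = {Σ_{n≤-1} c_n t^n : c_{-1} = 1}. -/

import Mathlib

/-!
By Frobenius, `u ^ p = map (frobenius) (expand p u)` only has monomials `t ^ (p k)`, so
`u(t) ^ p` is supported on `pℤ`, as is `α` by hypothesis. Supports add under multiplication,
so `α · u ^ p` is supported on `pℤ`, which misses the exponent `1` because `p ≠ 1`.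
-/

open Polynomial

theorem Polynomial.dvd_of_mem_support_pow_expChar {R : Type*} [CommSemiring R] (p : ℕ)
    [ExpChar R p] {f : R[X]} {n : ℕ} (hn : n ∈ (f ^ p).support) : p ∣ n := by
  rw [mem_support_iff, ← map_frobenius_expand, coeff_map, coeff_expand (expChar_pos R p)] at hn
  by_contra h
  simp [h] at hn

theorem HahnSeries.support_eval₂_C_single_subset {Γ R : Type*} [AddCommMonoid Γ]
    [PartialOrder Γ] [IsOrderedCancelAddMonoid Γ] [CommSemiring R] (g : Γ) (r : R) (f : R[X]) :
    (f.eval₂ C (single g r)).support ⊆ (· • g) '' (f.support : Set ℕ) := by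
  intro j hj
  rw [mem_support, eval₂_eq_sum_range, coeff_sum] at hj
  obtain ⟨n, -, hn⟩ := Finset.exists_ne_zero_of_sum_ne_zero hj
  rw [single_pow, C_mul_eq_smul, coeff_smul, coeff_single] at hn
  by_cases hjn : j = n • g
  · refine ⟨n, ?_, hjn.symm⟩
    rw [Finset.mem_coe, Polynomial.mem_support_iff]
    rintro h0
    simp [h0] at hn
  · simp [hjn] at hn

theorem LaurentSeries.algebraMap_eq_C (R : Type*) [CommSemiring R] :
    algebraMap R (LaurentSeries R) = HahnSeries.C := by
  ext c
  rw [HahnSeries.algebraMap_apply', PowerSeries.algebraMap_apply, Algebra.algebraMap_self_apply,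
    HahnSeries.ofPowerSeries_C]

/-- `F_q((t^{-1}))` is modelled as `LaurentSeries F` in the variable `X = t^{-1}`, so the
coefficient of `t^{-m}` sits at exponent `m`, and polynomials embed by `t ↦ X⁻¹`, i.e. via
`aeval (single (-1) 1)`. -/
theorem stmt_0 (p : ℕ) (F : Type*) [Field F] [Fintype F] (hp : CharP F p)
    (α : LaurentSeries F)
    (hα : ∀ m : ℤ, α.coeff m ≠ 0 → ∃ n : ℕ, 1 ≤ n ∧ m = (p : ℤ) * n)
    (u : Polynomial F) :
    (α * (Polynomial.aeval (HahnSeries.single (-1 : ℤ) (1 : F)) u) ^ p).coeff 1 = 0 := by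
  have : ExpChar F p := ExpChar.prime (CharP.char_is_prime F p)
  let S : Set ℤ := {m | (p : ℤ) ∣ m}
  have hαS : α.support ⊆ S := fun m hm => by
    obtain ⟨n, -, rfl⟩ := hα m hm
    exact dvd_mul_right _ _
  have huS : ((aeval (HahnSeries.single (-1 : ℤ) (1 : F)) u) ^ p).support ⊆ S := by
    rw [aeval_def, LaurentSeries.algebraMap_eq_C, ← eval₂_pow]
    intro _ hj
    obtain ⟨n, hn, rfl⟩ := HahnSeries.support_eval₂_C_single_subset _ _ _ hj
    obtain ⟨k, rfl⟩ := dvd_of_mem_support_pow_expChar p hn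
    exact ⟨-k, by push_cast; ring⟩
  have h1 : (1 : ℤ) ∉ S := fun h => CharP.char_ne_one F p <|
    Nat.dvd_one.mp (Int.natCast_dvd_natCast.mp h)
  by_contra h
  obtain ⟨i, hi, j, hj, hij⟩ := HahnSeries.support_mul_subset ((HahnSeries.mem_support _ _).2 h)
  exact h1 (hij ▸ dvd_add (hαS hi) (huS hj))
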